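/- arXiv:1810.10482 — 4 statements merged into one kernel-verified Lean document; each statement's English description precedes it below -/
import Mathlib

section
/- Let λ : ℕ → ℝ be nondecreasing on {1,2,3,...} with λ(h) ≥ 1 for all h ≥ 1, let Λ ≥ 0, and define n(Λ) := max{n ∈ ℕ : Σ_{h=1}^{n} λ(h) ≤ Λ} (the empty sum being 0). Then every finite prefix-closed set S of binary strings whose non-root cost exceeds the budget, i.e. Σ_{v ∈ S, v ≠ ε} λ(depth(v)) > Λ, contains at least n(Λ) + 1 non-root elements. -/
lemma tree_cost_aux (lam : ℕ → ℝ)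
    (hmono : ∀ h₁ h₂ : ℕ, 1 ≤ h₁ → h₁ ≤ h₂ → lam h₁ ≤ lam h₂) :
    ∀ n : ℕ, ∀ S : Finset (List Bool), S.card = n →
    (∀ v ∈ S, ∀ w : List Bool, w <+: v → w ∈ S) →
    ∑ v ∈ S.filter (fun v => v ≠ []), lam v.length ≤
      ∑ h ∈ Finset.Icc 1 (S.filter (fun v => v ≠ [])).card, lam h := by
  intro n
  induction n using Nat.strong_induction_on with
  | _ n IH =>
    intro S hcard hpc
    set T := S.filter (fun v => v ≠ []) with hT
    by_cases hTe : T = ∅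
    · simp [hTe]
    · -- pick an element of maximal length
      obtain ⟨v, hvT, hvmax⟩ := T.exists_max_image (fun v => v.length)
        (Finset.nonempty_of_ne_empty hTe)
      have hvS : v ∈ S := (Finset.mem_filter.mp hvT).1
      have hvne : v ≠ [] := (Finset.mem_filter.mp hvT).2
      have hvlen : 1 ≤ v.length := by
        cases v with
        | nil => exact absurd rfl hvne
        | cons a l => simp
      -- all nonempty prefixes of v are in T, so v.length ≤ T.card
      have hlen_le : v.length ≤ T.card := by
        have hinj : ∀ h ∈ Finset.Icc 1 v.length, v.take h ∈ T := by
          intro h hh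
          obtain ⟨h1, h2⟩ := Finset.mem_Icc.mp hh
          refine Finset.mem_filter.mpr ⟨hpc v hvS _ (List.take_prefix h v), ?_⟩
          intro hnil
          have := congrArg List.length hnil
          simp [min_eq_left h2] at this
          omega
        calc v.length = (Finset.Icc 1 v.length).card := by simp
          _ ≤ T.card := by
              apply Finset.card_le_card_of_injOn (fun h => v.take h) hinj
              intro a ha b hb hab
              obtain ⟨_, ha2⟩ := Finset.mem_Icc.mp ha
              obtain ⟨_, hb2⟩ := Finset.mem_Icc.mp hb
              have := congrArg List.length hab
              simpa [min_eq_left ha2, min_eq_left hb2] using this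
      -- S' = S.erase v is prefix-closed
      set S' := S.erase v with hS'
      have hpc' : ∀ w ∈ S', ∀ u : List Bool, u <+: w → u ∈ S' := by
        intro w hw u hu
        have hwS : w ∈ S := Finset.mem_of_mem_erase hw
        have huS : u ∈ S := hpc w hwS u hu
        refine Finset.mem_erase.mpr ⟨?_, huS⟩
        intro hequ
        rw [hequ] at hu
        have hwne : w ≠ [] := by
          rintro rfl
          exact hvne (List.prefix_nil.mp hu)
        have hwT : w ∈ T := Finset.mem_filter.mpr ⟨hwS, hwne⟩
        have hle := hvmax w hwT
        have heq : v = w := List.IsPrefix.eq_of_length hu (le_antisymm hu.length_le hle)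
        exact (Finset.mem_erase.mp hw).1 heq.symm
      have hT' : S'.filter (fun v => v ≠ []) = T.erase v := by
        ext x
        simp [hS', hT, Finset.mem_filter, Finset.mem_erase]
        tauto
      have hcard' : S'.card < n := by
        rw [← hcard, hS']
        exact Finset.card_erase_lt_of_mem hvS
      have hIH := IH S'.card hcard' S' rfl hpc'
      rw [hT'] at hIH
      have hTcard : T.card = (T.erase v).card + 1 := by
        rw [Finset.card_erase_of_mem hvT]
        omega
      have hsplit : ∑ w ∈ T, lam w.length =
          lam v.length + ∑ w ∈ T.erase v, lam w.length := by
        rw [← Finset.add_sum_erase _ _ hvT]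
      have hIcc : Finset.Icc 1 T.card =
          insert T.card (Finset.Icc 1 (T.erase v).card) := by
        ext x
        simp only [Finset.mem_Icc, Finset.mem_insert]
        omega
      rw [hsplit, hIcc, Finset.sum_insert (by simp only [Finset.mem_Icc, not_and, not_le]; omega)]
      have hle1 : lam v.length ≤ lam T.card := hmono _ _ hvlen hlen_le
      linarith

/-- With `lam` nondecreasing on `{1,2,...}` and `lam h ≥ 1` for `h ≥ 1`,
budget `Λ ≥ 0` and `n(Λ) = max {n : ∑_{h=1}^n lam h ≤ Λ}`, every finite prefix-closed
set `S` of binary strings whose non-root cost exceeds `Λ` has at least `n(Λ) + 1`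
non-root elements. -/
theorem stmt_1 (lam : ℕ → ℝ)
    (hmono : ∀ h₁ h₂ : ℕ, 1 ≤ h₁ → h₁ ≤ h₂ → lam h₁ ≤ lam h₂)
    (hge1 : ∀ h : ℕ, 1 ≤ h → 1 ≤ lam h)
    (Λ : ℝ) (hΛ : 0 ≤ Λ)
    (nΛ : ℕ) (hnΛ : IsGreatest {n : ℕ | ∑ h ∈ Finset.Icc 1 n, lam h ≤ Λ} nΛ)
    (S : Finset (List Bool)) (hroot : ([] : List Bool) ∈ S)
    (hpc : ∀ v ∈ S, ∀ w : List Bool, w <+: v → w ∈ S)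
    (hover : Λ < ∑ v ∈ S.filter (fun v => v ≠ []), lam v.length) :
    nΛ + 1 ≤ (S.filter (fun v => v ≠ [])).card := by
  by_contra h
  push_neg at h
  have hle : (S.filter (fun v => v ≠ [])).card ≤ nΛ := by omega
  have h1 := tree_cost_aux lam hmono S.card S rfl hpc
  have h2 : ∑ h ∈ Finset.Icc 1 (S.filter (fun v => v ≠ [])).card, lam h ≤
      ∑ h ∈ Finset.Icc 1 nΛ, lam h := by
    apply Finset.sum_le_sum_of_subset_of_nonneg
    · exact Finset.Icc_subset_Icc_right hle
    · intro i hi _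
      have := hge1 i (Finset.mem_Icc.mp hi).1
      linarith
  have h3 : ∑ h ∈ Finset.Icc 1 nΛ, lam h ≤ Λ := hnΛ.1
  linarith
end

section
/- Let 0 < ρ* ≤ ρ < 1, 0 < ν* ≤ ν, d* ≥ 0 and C* > 0, and suppose that N_{h}(2ν*·(ρ*)^{h}) ≤ C*·(ρ*)^{−d*·h} for every depth h ∈ ℕ. Set h_min := log(ν/ν*)/log(1/ρ). Then for every depth h ∈ ℕ, N_h(2ν·ρ^h) ≤ max( C*·2^{(log ρ* + log(ν*/ν))/log ρ}, 2^{h_min} ) · ρ^{−h·[ d* + (log 2)·( 1/log(1/ρ) − 1/log(1/ρ*) ) ]}. -/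
private lemma stmt9_aux_lin (L Ls m l2 d t b e kk hh hp s u : ℝ)
    (hL : L < 0) (hLs : Ls < 0) (hLsL : Ls ≤ L) (hm : 0 ≤ m) (hl2 : 0 < l2)
    (hd : 0 ≤ d) (hhpt : hp ≤ t) (hthp : t - 1 < hp) (hkk : kk = hh - hp)
    (htLs : t * Ls = m + hh * L) (hs : s * Ls = m) (hu : u * Ls = L)
    (hbL : b * L = Ls - m)
    (heL : e * L = -(hh * d * L) + hh * l2 * (1 - u)) :
    kk * l2 + (-(d * hp)) * Ls ≤ b * l2 + e * L := by
  have hs0 : s ≤ 0 := by nlinarith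
  have hb : 1 - s ≤ b := by
    nlinarith [mul_le_mul_of_nonneg_left hLsL (by linarith : (0:ℝ) ≤ 1 - s)]
  have hts : t = s + hh * u := by
    have h1 : t * Ls = (s + hh * u) * Ls := by
      rw [add_mul, hs, mul_assoc, hu]; linarith [htLs]
    exact mul_right_cancel₀ hLs.ne h1
  have p1 : d * (t * Ls) ≤ d * (hp * Ls) :=
    mul_le_mul_of_nonneg_left (mul_le_mul_of_nonpos_right hhpt hLs.le) hd
  have p2 : (hh - hp) * l2 ≤ (hh - t + 1) * l2 :=
    mul_le_mul_of_nonneg_right (by linarith) hl2.le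
  have p3 : t * l2 = (s + hh * u) * l2 := by rw [← hts]
  have p4 : (1 - s) * l2 ≤ b * l2 := mul_le_mul_of_nonneg_right hb hl2.le
  have p5 : 0 ≤ d * m := mul_nonneg hd hm
  have p6 : d * (t * Ls) = d * m + d * (hh * L) := by rw [htLs]; ring
  subst hkk
  nlinarith [p1, p2, p3, p4, p5, p6, heL]

/-- Lemma 6 of the appendix, from Grill et al.: with near-optimality counts
`N_h(ε) = #{i < 2^h : sup_{x ∈ P h i} f x ≥ f* - ε}` for a binary hierarchical partition,
if `0 < ρ* ≤ ρ < 1`, `0 < ν* ≤ ν`, `d* ≥ 0`, `C* > 0` and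
`N_h(2ν*·(ρ*)^h) ≤ C*·(ρ*)^{-d*·h}` for all `h`, then with
`h_min = log(ν/ν*)/log(1/ρ)`, for every `h`,
`N_h(2ν·ρ^h) ≤ max (C*·2^{(log ρ* + log(ν*/ν))/log ρ}) (2^{h_min})
  · ρ^{-h·(d* + log 2·(1/log(1/ρ) - 1/log(1/ρ*)))}`. -/
theorem stmt_9 {X : Type*} [Nonempty X] (f : X → ℝ) (hbdd : BddAbove (Set.range f))
    (P : ℕ → ℕ → Set X)
    (hne : ∀ h i : ℕ, i < 2 ^ h → (P h i).Nonempty)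
    (hroot : P 0 0 = Set.univ)
    (hnest : ∀ h j : ℕ, j < 2 ^ (h + 1) → P (h + 1) j ⊆ P h (j / 2))
    (N : ℕ → ℝ → ℕ)
    (hN : ∀ (h : ℕ) (ε : ℝ), N h ε =
      Set.ncard {i : ℕ | i < 2 ^ h ∧ sSup (Set.range f) - ε ≤ sSup (f '' P h i)})
    (ρstar ρ νstar ν dstar Cstar : ℝ)
    (hρstar : 0 < ρstar) (hρρ : ρstar ≤ ρ) (hρ1 : ρ < 1)
    (hνstar : 0 < νstar) (hνν : νstar ≤ ν) (hdstar : 0 ≤ dstar) (hCstar : 0 < Cstar)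
    (hhyp : ∀ h : ℕ, (N h (2 * νstar * ρstar ^ h) : ℝ) ≤ Cstar * ρstar ^ (-(dstar * h)))
    (hmin : ℝ) (hhmin : hmin = Real.log (ν / νstar) / Real.log (1 / ρ)) :
    ∀ h : ℕ, (N h (2 * ν * ρ ^ h) : ℝ) ≤
      max (Cstar * (2 : ℝ) ^ ((Real.log ρstar + Real.log (νstar / ν)) / Real.log ρ))
          ((2 : ℝ) ^ hmin) *
        ρ ^ (-((h : ℝ) * (dstar +
          Real.log 2 * (1 / Real.log (1 / ρ) - 1 / Real.log (1 / ρstar))))) := by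
  classical
  set F := sSup (Set.range f) with hF
  set T : ℕ → ℝ → Finset ℕ := fun h ε =>
    (Finset.range (2 ^ h)).filter fun i => F - ε ≤ sSup (f '' P h i) with hT
  have hNT : ∀ h ε, (N h ε : ℕ) = (T h ε).card := by
    intro h ε
    rw [hN]
    rw [show {i : ℕ | i < 2 ^ h ∧ F - ε ≤ sSup (f '' P h i)} = ↑(T h ε) by
      ext i; simp [hT]]
    exact Set.ncard_coe_finset _
  have hsub : ∀ (h' k j : ℕ), j < 2 ^ (h' + k) → P (h' + k) j ⊆ P h' (j / 2 ^ k) := by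
    intro h' k
    induction k with
    | zero => intro j hj; simpa using subset_rfl
    | succ k ih =>
      intro j hj
      have h1 : P (h' + (k + 1)) j ⊆ P (h' + k) (j / 2) :=
        hnest _ _ (by show j < 2 ^ (h' + k + 1); rwa [Nat.add_assoc])
      have h2 : j / 2 < 2 ^ (h' + k) := by
        rw [Nat.div_lt_iff_lt_mul (by norm_num : (0:ℕ) < 2)]
        rw [show 2 ^ (h' + k) * 2 = 2 ^ (h' + (k+1)) from by ring]
        exact hj
      refine h1.trans ((ih _ h2).trans ?_)
      rw [Nat.div_div_eq_div_mul, show 2 * 2 ^ k = 2 ^ (k + 1) from by ring]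
  have hsupmono : ∀ {S S' : Set X}, S ⊆ S' → S.Nonempty → sSup (f '' S) ≤ sSup (f '' S') := by
    intro S S' hSS hSne
    exact csSup_le_csSup (hbdd.mono (Set.image_subset_range f S')) (hSne.image f)
      (Set.image_mono hSS)
  have hchain : ∀ (h' k : ℕ) (ε : ℝ), (T (h' + k) ε).card ≤ 2 ^ k * (T h' ε).card := by
    intro h' k ε
    calc (T (h' + k) ε).card
        ≤ 2 ^ k * ((T (h' + k) ε).image (· / 2 ^ k)).card := by
          refine Finset.card_le_mul_card_image _ _ ?_
          intro a _
          refine (Finset.card_le_card (show _ ⊆ Finset.Ico (a * 2 ^ k) (a * 2 ^ k + 2 ^ k)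
            from ?_)).trans (by simp)
          intro i hi
          simp only [Finset.mem_filter] at hi
          obtain ⟨hi1, rfl⟩ := hi
          simp only [Finset.mem_Ico]
          exact ⟨Nat.div_mul_le_self i (2 ^ k), Nat.lt_div_mul_add (by positivity)⟩
      _ ≤ 2 ^ k * (T h' ε).card := by
          refine Nat.mul_le_mul_left _ (Finset.card_le_card ?_)
          intro a ha
          obtain ⟨i, hi, rfl⟩ := Finset.mem_image.1 ha
          simp only [hT, Finset.mem_filter, Finset.mem_range] at hi ⊢
          refine ⟨?_, hi.2.trans (hsupmono (hsub _ _ _ hi.1) (hne _ _ hi.1))⟩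
          rw [Nat.div_lt_iff_lt_mul (by positivity)]
          rw [← pow_add]
          exact hi.1
  have hTmono : ∀ (h : ℕ) {ε ε' : ℝ}, ε ≤ ε' → T h ε ⊆ T h ε' := by
    intro h ε ε' hεε' i hi
    simp only [hT, Finset.mem_filter, Finset.mem_range] at hi ⊢
    exact ⟨hi.1, le_trans (by linarith) hi.2⟩
  -- basic real facts
  have hρ : 0 < ρ := lt_of_lt_of_le hρstar hρρ
  have hν : 0 < ν := lt_of_lt_of_le hνstar hνν
  have hρs1 : ρstar < 1 := lt_of_le_of_lt hρρ hρ1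
  have hL : Real.log ρ < 0 := Real.log_neg hρ hρ1
  have hLs : Real.log ρstar < 0 := Real.log_neg hρstar hρs1
  have hLsL : Real.log ρstar ≤ Real.log ρ := Real.log_le_log hρstar hρρ
  have hm0 : 0 ≤ Real.log (ν / νstar) := Real.log_nonneg ((one_le_div hνstar).2 hνν)
  have hlog2 : 0 < Real.log 2 := Real.log_pos (by norm_num)
  have hinv : Real.log (1/ρ) = -Real.log ρ := by rw [one_div, Real.log_inv]
  have hinvs : Real.log (1/ρstar) = -Real.log ρstar := by rw [one_div, Real.log_inv]
  intro h
  set E : ℝ := -((h : ℝ) * (dstar +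
      Real.log 2 * (1 / Real.log (1 / ρ) - 1 / Real.log (1 / ρstar)))) with hEdef
  have hcnn : 0 ≤ dstar + Real.log 2 * (1 / Real.log (1/ρ) - 1 / Real.log (1/ρstar)) := by
    have h1 : 1 / (-Real.log ρstar) ≤ 1 / (-Real.log ρ) :=
      one_div_le_one_div_of_le (by linarith) (by linarith)
    rw [hinv, hinvs]
    nlinarith [hlog2.le]
  have hE0 : E ≤ 0 := neg_nonpos.2 (mul_nonneg (Nat.cast_nonneg h) hcnn)
  have hρE : (1:ℝ) ≤ ρ ^ E := Real.one_le_rpow_of_pos_of_le_one_of_nonpos hρ hρ1.le hE0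
  have hmaxnn : 0 ≤ max (Cstar * (2 : ℝ) ^ ((Real.log ρstar + Real.log (νstar / ν)) / Real.log ρ))
      ((2 : ℝ) ^ hmin) := le_trans (Real.rpow_pos_of_pos two_pos hmin).le (le_max_right _ _)
  rcases le_total (h:ℝ) hmin with hcase | hcase
  · -- small h
    have hcard : (T h (2*ν*ρ^h)).card ≤ 2 ^ h :=
      (Finset.card_filter_le _ _).trans_eq (Finset.card_range _)
    have b1 : (N h (2*ν*ρ^h) : ℝ) ≤ (2:ℝ) ^ hmin := by
      rw [hNT]
      calc ((T h (2*ν*ρ^h)).card : ℝ) ≤ ((2^h : ℕ) : ℝ) := by exact_mod_cast hcard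
        _ = (2:ℝ) ^ ((h:ℕ):ℝ) := by rw [Real.rpow_natCast]; push_cast; ring
        _ ≤ (2:ℝ) ^ hmin := Real.rpow_le_rpow_of_exponent_le one_le_two hcase
    refine b1.trans (le_trans (le_max_right
      (Cstar * (2 : ℝ) ^ ((Real.log ρstar + Real.log (νstar / ν)) / Real.log ρ)) _) ?_)
    exact le_mul_of_one_le_right hmaxnn hρE
  · -- large h
    set m := Real.log (ν / νstar) with hmdef
    set t : ℝ := (m + h * Real.log ρ) / Real.log ρstar with htdef
    have hnum : m + h * Real.log ρ ≤ 0 := by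
      rw [hhmin, hinv] at hcase
      rw [div_le_iff₀ (by linarith : (0:ℝ) < -Real.log ρ)] at hcase
      nlinarith
    have ht0 : 0 ≤ t := by
      rw [htdef, ← neg_div_neg_eq]
      exact div_nonneg (by linarith) (by linarith)
    have hth : t ≤ (h:ℝ) := by
      rw [htdef, div_le_iff_of_neg hLs]
      have : (h:ℝ) * Real.log ρstar ≤ (h:ℝ) * Real.log ρ :=
        mul_le_mul_of_nonneg_left hLsL (Nat.cast_nonneg h)
      linarith
    set h' := ⌊t⌋₊ with hh'def
    have hh't : (h' : ℝ) ≤ t := Nat.floor_le ht0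
    have hth' : t - 1 < (h' : ℝ) := Nat.sub_one_lt_floor t
    have hh'h : h' ≤ h := by exact_mod_cast hh't.trans hth
    set k := h - h' with hkdef
    have hhk : h = h' + k := by omega
    have hkcast : (k:ℝ) = (h:ℝ) - (h':ℝ) := by
      rw [hkdef, Nat.cast_sub hh'h]
    have htLs : t * Real.log ρstar = m + h * Real.log ρ := by
      rw [htdef, div_mul_cancel₀ _ hLs.ne]
    have hmsplit : m = Real.log ν - Real.log νstar := by
      rw [hmdef, Real.log_div hν.ne' hνstar.ne']
    -- ε comparison
    have hεε : 2 * ν * ρ ^ h ≤ 2 * νstar * ρstar ^ h' := by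
      have hx : (0:ℝ) < ν * ρ ^ h := by positivity
      have hy : (0:ℝ) < νstar * ρstar ^ h' := by positivity
      have hlog : Real.log (ν * ρ ^ h) ≤ Real.log (νstar * ρstar ^ h') := by
        rw [Real.log_mul hν.ne' (by positivity), Real.log_mul hνstar.ne' (by positivity),
          Real.log_pow, Real.log_pow]
        have h2 : t * Real.log ρstar ≤ (h':ℝ) * Real.log ρstar :=
          mul_le_mul_of_nonpos_right hh't hLs.le
        linarith [htLs, hmsplit]
      have := (Real.log_le_log_iff hx hy).1 hlog
      linarith
    -- chain step
    have main1 : (N h (2*ν*ρ^h) : ℝ) ≤ (2:ℝ)^(k:ℕ) * (Cstar * ρstar ^ (-(dstar * h'))) := by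
      have c1 : (T h (2*ν*ρ^h)).card ≤ 2 ^ k * (T h' (2*ν*ρ^h)).card := by
        rw [hhk]; exact hchain h' k _
      have c2 : (T h' (2*ν*ρ^h)).card ≤ (T h' (2*νstar*ρstar^h')).card :=
        Finset.card_le_card (hTmono _ hεε)
      have c3 : (N h' (2*νstar*ρstar^h') : ℝ) ≤ Cstar * ρstar ^ (-(dstar * h')) := hhyp h'
      rw [hNT] at c3 ⊢
      calc ((T h (2*ν*ρ^h)).card : ℝ)
          ≤ ((2 ^ k * (T h' (2*νstar*ρstar^h')).card : ℕ) : ℝ) := by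
            exact_mod_cast c1.trans (Nat.mul_le_mul_left _ c2)
        _ = (2:ℝ)^(k:ℕ) * ((T h' (2*νstar*ρstar^h')).card : ℝ) := by push_cast; ring
        _ ≤ _ := mul_le_mul_of_nonneg_left c3 (by positivity)
    -- analytic step
    have hmν : Real.log (νstar / ν) = -m := by
      rw [Real.log_div hνstar.ne' hν.ne', hmsplit]; ring
    have hbL : ((Real.log ρstar + Real.log (νstar / ν)) / Real.log ρ) * Real.log ρ
        = Real.log ρstar - m := by
      rw [hmν, div_mul_cancel₀ _ hL.ne]; ring
    have hs : (m / Real.log ρstar) * Real.log ρstar = m := div_mul_cancel₀ _ hLs.ne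
    have hu : (Real.log ρ / Real.log ρstar) * Real.log ρstar = Real.log ρ :=
      div_mul_cancel₀ _ hLs.ne
    have heL : E * Real.log ρ = -((h:ℝ) * dstar * Real.log ρ)
        + (h:ℝ) * Real.log 2 * (1 - Real.log ρ / Real.log ρstar) := by
      rw [hEdef, hinv, hinvs]
      field_simp [hL.ne, hLs.ne]
      ring
    have key := stmt9_aux_lin (Real.log ρ) (Real.log ρstar) m (Real.log 2) dstar t
      ((Real.log ρstar + Real.log (νstar / ν)) / Real.log ρ) E (k:ℝ) (h:ℝ) (h':ℝ)
      (m / Real.log ρstar) (Real.log ρ / Real.log ρstar)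
      hL hLs hLsL hm0 hlog2 hdstar hh't hth' hkcast htLs hs hu hbL heL
    have main2 : (2:ℝ)^(k:ℕ) * (Cstar * ρstar ^ (-(dstar * h'))) ≤
        Cstar * (2:ℝ) ^ ((Real.log ρstar + Real.log (νstar / ν)) / Real.log ρ) * ρ ^ E := by
      have hlhs : (0:ℝ) < (2:ℝ)^(k:ℕ) * (Cstar * ρstar ^ (-(dstar * h'))) := by positivity
      have hrhs : (0:ℝ) < Cstar * (2:ℝ) ^ ((Real.log ρstar + Real.log (νstar / ν)) / Real.log ρ)
          * ρ ^ E := by positivity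
      rw [← Real.log_le_log_iff hlhs hrhs]
      have l1 : Real.log ((2:ℝ)^(k:ℕ) * (Cstar * ρstar ^ (-(dstar * h')))) =
          (k:ℝ) * Real.log 2 + (Real.log Cstar + (-(dstar * h')) * Real.log ρstar) := by
        rw [Real.log_mul (by positivity) (by positivity),
          Real.log_mul hCstar.ne' (by positivity),
          Real.log_pow, Real.log_rpow hρstar]
      have l2 : Real.log (Cstar *
            (2:ℝ) ^ ((Real.log ρstar + Real.log (νstar / ν)) / Real.log ρ) * ρ ^ E) =
          Real.log Cstar +
            ((Real.log ρstar + Real.log (νstar / ν)) / Real.log ρ) * Real.log 2 +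
            E * Real.log ρ := by
        rw [Real.log_mul (by positivity) (by positivity),
          Real.log_mul hCstar.ne' (by positivity),
          Real.log_rpow two_pos, Real.log_rpow hρ]
      rw [l1, l2]
      linarith [key]
    calc (N h (2*ν*ρ^h) : ℝ) ≤ (2:ℝ)^(k:ℕ) * (Cstar * ρstar ^ (-(dstar * h'))) := main1
      _ ≤ Cstar * (2:ℝ) ^ ((Real.log ρstar + Real.log (νstar / ν)) / Real.log ρ) * ρ ^ E :=
          main2
      _ ≤ _ := mul_le_mul_of_nonneg_right (le_max_left _ _)
          (Real.rpow_nonneg hρ.le E)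
end

section
/- For 0 < ρ < 1 and ν > 0, define the near-optimality dimension d(ν, ρ) := inf{ d' ≥ 0 : there exists C > 0 such that N_h(2ν·ρ^h) ≤ C·ρ^{−d'·h} for all h ∈ ℕ }. Let 0 < ρ* ≤ ρ < 1 and 0 < ν* ≤ ν, and suppose the defining set for d(ν*, ρ*) is nonempty (so d(ν*, ρ*) is finite). Then d(ν, ρ) ≤ d(ν*, ρ*) + (log 2)·( 1/log(1/ρ) − 1/log(1/ρ*) ). -/
private theorem fiber_count10 (k : ℕ) (S T : Finset ℕ) (hmap : ∀ i ∈ S, i / 2^k ∈ T) :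
    S.card ≤ 2^k * T.card := by
  classical
  calc S.card = ∑ j ∈ T, (S.filter (fun i => i / 2^k = j)).card :=
        Finset.card_eq_sum_card_fiberwise hmap
    _ ≤ ∑ _j ∈ T, 2^k := by
        refine Finset.sum_le_sum fun j _ => ?_
        have hsub : (S.filter (fun i => i / 2^k = j)) ⊆ Finset.Ico (j * 2^k) ((j+1) * 2^k) := by
          intro i hi
          simp only [Finset.mem_filter] at hi
          rw [Finset.mem_Ico]
          constructor
          · rw [← hi.2]; exact Nat.div_mul_le_self i (2^k)
          · rw [← hi.2]
            calc i = 2^k * (i / 2^k) + i % 2^k := (Nat.div_add_mod i (2^k)).symm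
              _ < 2^k * (i / 2^k) + 2^k := by
                  have := Nat.mod_lt i (pow_pos two_pos k); omega
              _ = (i / 2^k + 1) * 2^k := by ring
        calc _ ≤ (Finset.Ico (j * 2^k) ((j+1) * 2^k)).card := Finset.card_le_card hsub
          _ = 2^k := by rw [Nat.card_Ico, add_mul, one_mul, Nat.add_sub_cancel_left]
    _ = 2^k * T.card := by simp [mul_comm]

private theorem anc_lem10 {X : Type*} (P : ℕ → ℕ → Set X)
    (hnest : ∀ h j : ℕ, j < 2 ^ (h + 1) → P (h + 1) j ⊆ P h (j / 2)) :
    ∀ (k h' i : ℕ), i < 2 ^ (h' + k) → P (h' + k) i ⊆ P h' (i / 2 ^ k) := by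
  intro k
  induction k with
  | zero => intro h' i hi; simp
  | succ k ih =>
    intro h' i hi
    have h2 : i / 2 < 2 ^ (h' + k) := by
      rw [Nat.div_lt_iff_lt_mul two_pos]
      calc i < 2 ^ (h' + (k+1)) := hi
        _ = 2 ^ (h' + k) * 2 := by rw [← pow_succ, Nat.add_succ]
    have h3 := ih h' (i / 2) h2
    have h1 : P (h' + (k+1)) i ⊆ P (h' + k) (i / 2) :=
      hnest (h' + k) i (by rwa [Nat.add_succ] at hi)
    refine h1.trans ?_
    have : i / 2 / 2 ^ k = i / 2 ^ (k+1) := by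
      rw [Nat.div_div_eq_div_mul, ← pow_succ']
    rwa [this] at h3

private theorem count_le10 {X : Type*} (f : X → ℝ) (hbdd : BddAbove (Set.range f))
    (P : ℕ → ℕ → Set X)
    (hne : ∀ h i : ℕ, i < 2 ^ h → (P h i).Nonempty)
    (hnest : ∀ h j : ℕ, j < 2 ^ (h + 1) → P (h + 1) j ⊆ P h (j / 2))
    (h' k : ℕ) (ε ε' : ℝ) (hεε : ε ≤ ε') :
    Set.ncard {i : ℕ | i < 2 ^ (h' + k) ∧ sSup (Set.range f) - ε ≤ sSup (f '' P (h' + k) i)}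
      ≤ 2 ^ k * Set.ncard {i : ℕ | i < 2 ^ h' ∧ sSup (Set.range f) - ε' ≤ sSup (f '' P h' i)} := by
  classical
  set S : Finset ℕ := (Finset.range (2 ^ (h' + k))).filter
      (fun i => sSup (Set.range f) - ε ≤ sSup (f '' P (h' + k) i)) with hS
  set T : Finset ℕ := (Finset.range (2 ^ h')).filter
      (fun i => sSup (Set.range f) - ε' ≤ sSup (f '' P h' i)) with hT
  have e1 : {i : ℕ | i < 2 ^ (h' + k) ∧ sSup (Set.range f) - ε ≤ sSup (f '' P (h' + k) i)}
      = ↑S := by ext i; simp [hS]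
  have e2 : {i : ℕ | i < 2 ^ h' ∧ sSup (Set.range f) - ε' ≤ sSup (f '' P h' i)}
      = ↑T := by ext i; simp [hT]
  rw [e1, e2, Set.ncard_coe_finset, Set.ncard_coe_finset]
  apply fiber_count10
  intro i hi
  simp only [hS, Finset.mem_filter, Finset.mem_range] at hi
  simp only [hT, Finset.mem_filter, Finset.mem_range]
  have hdiv : i / 2 ^ k < 2 ^ h' := by
    rw [Nat.div_lt_iff_lt_mul (pow_pos two_pos k), ← pow_add]
    exact hi.1
  refine ⟨hdiv, ?_⟩
  have hsub : f '' P (h' + k) i ⊆ f '' P h' (i / 2 ^ k) :=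
    Set.image_mono (f := f) (anc_lem10 P hnest k h' i hi.1)
  have hb : BddAbove (f '' P h' (i / 2 ^ k)) :=
    hbdd.mono (Set.image_subset_range f _)
  have hnonempty : (f '' P (h' + k) i).Nonempty := (hne _ _ hi.1).image f
  calc sSup (Set.range f) - ε' ≤ sSup (Set.range f) - ε := by linarith
    _ ≤ sSup (f '' P (h' + k) i) := hi.2
    _ ≤ sSup (f '' P h' (i / 2 ^ k)) := csSup_le_csSup hb hnonempty hsub

set_option maxHeartbeats 1000000 in
/-- With `N_h(ε) = #{i < 2^h : sup_{x ∈ P h i} f x ≥ f* - ε}` and the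
near-optimality dimension `d(ν,ρ) = inf {d' ≥ 0 : ∃ C > 0, ∀ h, N_h(2νρ^h) ≤ C·ρ^{-d'h}}`,
if `0 < ρ* ≤ ρ < 1`, `0 < ν* ≤ ν`, and the defining set for `d(ν*,ρ*)` is nonempty, then
`d(ν,ρ) ≤ d(ν*,ρ*) + log 2·(1/log(1/ρ) - 1/log(1/ρ*))`. -/
theorem stmt_10 {X : Type*} [Nonempty X] (f : X → ℝ) (hbdd : BddAbove (Set.range f))
    (P : ℕ → ℕ → Set X)
    (hne : ∀ h i : ℕ, i < 2 ^ h → (P h i).Nonempty)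
    (hroot : P 0 0 = Set.univ)
    (hnest : ∀ h j : ℕ, j < 2 ^ (h + 1) → P (h + 1) j ⊆ P h (j / 2))
    (N : ℕ → ℝ → ℕ)
    (hN : ∀ (h : ℕ) (ε : ℝ), N h ε =
      Set.ncard {i : ℕ | i < 2 ^ h ∧ sSup (Set.range f) - ε ≤ sSup (f '' P h i)})
    (Dset : ℝ → ℝ → Set ℝ)
    (hDset : ∀ ν ρ : ℝ, Dset ν ρ = {d' : ℝ | 0 ≤ d' ∧ ∃ C : ℝ, 0 < C ∧
      ∀ h : ℕ, (N h (2 * ν * ρ ^ h) : ℝ) ≤ C * ρ ^ (-(d' * h))})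
    (ρstar ρ νstar ν : ℝ)
    (hρstar : 0 < ρstar) (hρρ : ρstar ≤ ρ) (hρ1 : ρ < 1)
    (hνstar : 0 < νstar) (hνν : νstar ≤ ν)
    (hnonempty : (Dset νstar ρstar).Nonempty) :
    sInf (Dset ν ρ) ≤ sInf (Dset νstar ρstar) +
      Real.log 2 * (1 / Real.log (1 / ρ) - 1 / Real.log (1 / ρstar)) := by
  have hρ0 : 0 < ρ := hρstar.trans_le hρρ
  have hν0 : 0 < ν := hνstar.trans_le hνν
  obtain ⟨Δ, hΔdef⟩ : ∃ Δ : ℝ, Δ = Real.log 2 * (1 / Real.log (1 / ρ) - 1 / Real.log (1 / ρstar)) := ⟨_, rfl⟩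
  rw [← hΔdef]
  obtain ⟨L, hLdef⟩ : ∃ L : ℝ, L = -Real.log ρ := ⟨_, rfl⟩
  obtain ⟨Ls, hLsdef⟩ : ∃ Ls : ℝ, Ls = -Real.log ρstar := ⟨_, rfl⟩
  have hL : 0 < L := by
    rw [hLdef]; simpa using Real.log_neg hρ0 hρ1
  have hρs1 : ρstar < 1 := lt_of_le_of_lt hρρ hρ1
  have hLs : 0 < Ls := by
    rw [hLsdef]; simpa using Real.log_neg hρstar hρs1
  have hLLs : L ≤ Ls := by
    rw [hLdef, hLsdef]
    simpa using Real.log_le_log hρstar hρρ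
  have hΔ : Δ = Real.log 2 * (1 / L - 1 / Ls) := by
    rw [hΔdef, hLdef, hLsdef, one_div ρ, one_div ρstar, Real.log_inv, Real.log_inv]
  have hlog2 : 0 ≤ Real.log 2 := Real.log_nonneg one_le_two
  have hΔ0 : 0 ≤ Δ := by
    rw [hΔ]
    have : 1 / Ls ≤ 1 / L := one_div_le_one_div_of_le hL hLLs
    have h2 : 0 ≤ 1 / L - 1 / Ls := by linarith
    positivity
  obtain ⟨m, hmdef⟩ : ∃ m : ℝ, m = Real.log ν - Real.log νstar := ⟨_, rfl⟩
  have hm0 : 0 ≤ m := by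
    rw [hmdef]
    have := Real.log_le_log hνstar hνν
    linarith
  -- main step: for each d' in Dset νstar ρstar, d' + Δ ∈ Dset ν ρ
  have main : ∀ d' ∈ Dset νstar ρstar, d' + Δ ∈ Dset ν ρ := by
    intro d' hd'
    rw [hDset] at hd'
    obtain ⟨hd0, C, hC, hCb⟩ := hd'
    rw [hDset]
    refine ⟨by linarith, ?_⟩
    obtain ⟨E, hEdef⟩ : ∃ E : ℝ, E = (m / Ls + 1) * Real.log 2 := ⟨_, rfl⟩
    obtain ⟨C1, hC1def⟩ : ∃ C1 : ℝ, C1 = C * Real.exp E := ⟨_, rfl⟩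
    have hC1 : 0 < C1 := by rw [hC1def]; positivity
    obtain ⟨h0, hh0def⟩ : ∃ h0 : ℕ, h0 = ⌈m / L⌉₊ := ⟨_, rfl⟩
    refine ⟨C1 + 2 ^ h0, by positivity, ?_⟩
    intro h
    have hrpow_pos : (0:ℝ) < ρ ^ (-((d' + Δ) * (h:ℝ))) := Real.rpow_pos_of_pos hρ0 _
    by_cases hcase : h < h0
    · -- trivial bound
      have hNle : (N h (2 * ν * ρ ^ h) : ℝ) ≤ 2 ^ h := by
        have : N h (2 * ν * ρ ^ h) ≤ 2 ^ h := by
          rw [hN]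
          have hsub : {i : ℕ | i < 2 ^ h ∧
              sSup (Set.range f) - (2 * ν * ρ ^ h) ≤ sSup (f '' P h i)}
              ⊆ ↑(Finset.range (2 ^ h)) := by
            intro i hi; simpa using hi.1
          calc Set.ncard _ ≤ Set.ncard (↑(Finset.range (2 ^ h)) : Set ℕ) :=
                Set.ncard_le_ncard hsub (Finset.range (2 ^ h)).finite_toSet
            _ = 2 ^ h := by rw [Set.ncard_coe_finset, Finset.card_range]
        exact_mod_cast this
      have h1rpow : (1:ℝ) ≤ ρ ^ (-((d' + Δ) * (h:ℝ))) := by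
        apply Real.one_le_rpow_of_pos_of_le_one_of_nonpos hρ0 hρ1.le
        have : (0:ℝ) ≤ (d' + Δ) * h := by positivity
        linarith
      have hpow : (2:ℝ) ^ h ≤ 2 ^ h0 := by
        exact pow_le_pow_right₀ one_le_two hcase.le
      nlinarith [hrpow_pos]
    · -- main case h ≥ h0
      push_neg at hcase
      have hhL : m ≤ (h:ℝ) * L := by
        have h1 : m / L ≤ (h0:ℝ) := by rw [hh0def]; exact Nat.le_ceil _
        have h2 : (h0:ℝ) ≤ h := Nat.cast_le.2 hcase
        rw [div_le_iff₀ hL] at h1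
        nlinarith
      obtain ⟨t, htdef⟩ : ∃ t : ℝ, t = ((h:ℝ) * L - m) / Ls := ⟨_, rfl⟩
      have ht0 : 0 ≤ t := by
        rw [htdef]; apply div_nonneg (by linarith) hLs.le
      obtain ⟨h', hh'def⟩ : ∃ h' : ℕ, h' = ⌊t⌋₊ := ⟨_, rfl⟩
      have hh't : (h':ℝ) ≤ t := by rw [hh'def]; exact Nat.floor_le ht0
      have hth' : t < h' + 1 := by rw [hh'def]; exact_mod_cast Nat.lt_floor_add_one t
      have htLs : t * Ls = (h:ℝ) * L - m := by
        rw [htdef, div_mul_cancel₀ _ hLs.ne']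
      have hh'h : h' ≤ h := by
        have hc : (h':ℝ) ≤ (h:ℝ) := by
          have h1 : t * Ls ≤ (h:ℝ) * Ls := by
            rw [htLs]; nlinarith
          have h2 : t ≤ (h:ℝ) := le_of_mul_le_mul_right (by linarith) hLs
          linarith
        exact_mod_cast hc
      -- ε ≤ ε'
      have hεε' : 2 * ν * ρ ^ h ≤ 2 * νstar * ρstar ^ h' := by
        have base : ν * ρ ^ h ≤ νstar * ρstar ^ h' := by
          rw [← Real.log_le_log_iff (by positivity) (by positivity),
            Real.log_mul hν0.ne' (by positivity), Real.log_mul hνstar.ne' (by positivity),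
            Real.log_pow, Real.log_pow]
          have h1 : (h':ℝ) * Ls ≤ t * Ls := mul_le_mul_of_nonneg_right hh't hLs.le
          rw [htLs] at h1
          rw [hLdef, hLsdef, hmdef] at h1
          linarith
        linarith
      -- counting step
      have hdecomp : h' + (h - h') = h := by omega
      have step1 : N h (2 * ν * ρ ^ h) ≤ 2 ^ (h - h') * N h' (2 * νstar * ρstar ^ h') := by
        rw [hN, hN]
        have := count_le10 f hbdd P hne hnest h' (h - h')
          (2 * ν * ρ ^ h) (2 * νstar * ρstar ^ h') hεε'
        rwa [hdecomp] at this
      have step1' : (N h (2 * ν * ρ ^ h) : ℝ)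
          ≤ (2:ℝ) ^ (h - h') * (N h' (2 * νstar * ρstar ^ h') : ℝ) := by
        exact_mod_cast step1
      have step2 := hCb h'
      have chain : (N h (2 * ν * ρ ^ h) : ℝ)
          ≤ (2:ℝ) ^ (h - h') * (C * ρstar ^ (-(d' * (h':ℝ)))) := by
        calc (N h (2 * ν * ρ ^ h) : ℝ)
            ≤ (2:ℝ) ^ (h - h') * (N h' (2 * νstar * ρstar ^ h') : ℝ) := step1'
          _ ≤ (2:ℝ) ^ (h - h') * (C * ρstar ^ (-(d' * (h':ℝ)))) := by
              apply mul_le_mul_of_nonneg_left step2 (by positivity)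
      -- convert to exponentials
      have hkcast : ((h - h' : ℕ) : ℝ) = (h:ℝ) - (h':ℝ) := by
        push_cast [Nat.cast_sub hh'h]; ring
      have r1 : ((2:ℝ) ^ (h - h' : ℕ)) = Real.exp (Real.log 2 * ((h:ℝ) - h')) := by
        rw [← Real.rpow_natCast 2 (h - h'), Real.rpow_def_of_pos two_pos, hkcast]
      have r2 : ρstar ^ (-(d' * (h':ℝ))) = Real.exp (d' * (h':ℝ) * Ls) := by
        rw [Real.rpow_def_of_pos hρstar]
        congr 1
        rw [hLsdef]; ring
      have r3 : ρ ^ (-((d' + Δ) * (h:ℝ))) = Real.exp ((d' + Δ) * (h:ℝ) * L) := by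
        rw [Real.rpow_def_of_pos hρ0]
        congr 1
        rw [hLdef]; ring
      -- key exponent inequality
      have e2 : Real.log 2 * ((h:ℝ) - t + 1) = E + Δ * (h:ℝ) * L := by
        rw [hEdef, hΔ, htdef]
        field_simp
        ring
      have m1 : Real.log 2 * ((h:ℝ) - h') ≤ Real.log 2 * ((h:ℝ) - t + 1) :=
        mul_le_mul_of_nonneg_left (by linarith) hlog2
      have m2 : d' * ((h':ℝ) * Ls) ≤ d' * (t * Ls) :=
        mul_le_mul_of_nonneg_left (mul_le_mul_of_nonneg_right hh't hLs.le) hd0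
      have key : Real.log 2 * ((h:ℝ) - h') + d' * (h':ℝ) * Ls ≤ E + (d' + Δ) * (h:ℝ) * L := by
        have expand : (d' + Δ) * (h:ℝ) * L = d' * ((h:ℝ) * L) + Δ * (h:ℝ) * L := by ring
        have hdm : 0 ≤ d' * m := mul_nonneg hd0 hm0
        rw [htLs] at m2
        nlinarith
      -- finish
      have final : (2:ℝ) ^ (h - h') * (C * ρstar ^ (-(d' * (h':ℝ))))
          ≤ C1 * ρ ^ (-((d' + Δ) * (h:ℝ))) := by
        rw [r1, r2, r3, hC1def]
        calc Real.exp (Real.log 2 * ((h:ℝ) - h')) * (C * Real.exp (d' * (h':ℝ) * Ls))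
            = C * Real.exp (Real.log 2 * ((h:ℝ) - h') + d' * (h':ℝ) * Ls) := by
              rw [Real.exp_add]; ring
          _ ≤ C * Real.exp (E + (d' + Δ) * (h:ℝ) * L) := by
              apply mul_le_mul_of_nonneg_left (Real.exp_le_exp.2 key) hC.le
          _ = C * Real.exp E * Real.exp ((d' + Δ) * (h:ℝ) * L) := by
              rw [Real.exp_add]; ring
      have hC1le : C1 * ρ ^ (-((d' + Δ) * (h:ℝ)))
          ≤ (C1 + 2 ^ h0) * ρ ^ (-((d' + Δ) * (h:ℝ))) := by
        have h2p : (0:ℝ) < 2 ^ h0 := by positivity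
        apply mul_le_mul_of_nonneg_right (by linarith) hrpow_pos.le
      linarith
  -- conclude
  have hbb : BddBelow (Dset ν ρ) := by
    refine ⟨0, fun x hx => ?_⟩
    rw [hDset] at hx
    exact hx.1
  have step : ∀ d' ∈ Dset νstar ρstar, sInf (Dset ν ρ) ≤ d' + Δ :=
    fun d' hd' => csInf_le hbb (main d' hd')
  have : sInf (Dset ν ρ) - Δ ≤ sInf (Dset νstar ρstar) :=
    le_csInf hnonempty (fun d' hd' => by linarith [step d' hd'])
  linarith
end

section
/- Let N ≥ 1 be an integer, let ρ_max ∈ (0,1), and set D_max := log 2 / log(1/ρ_max). Consider the geometric grid ρ_i := ρ_max^{N/i} for i = 1, ..., N. Then for every ρ* ∈ (0, ρ_max] there exists an index i ∈ {1, ..., N} such that ρ* ≤ ρ_i ≤ ρ_max and (log 2)·( 1/log(1/ρ_i) − 1/log(1/ρ*) ) ≤ D_max / N. -/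
/-- Grid covering for MFPOO. For an integer `N ≥ 1`, `ρ_max ∈ (0,1)`,
`D_max = log 2 / log(1/ρ_max)` and the geometric grid `ρ_i = ρ_max^{N/i}` (`i = 1,…,N`),
every `ρ* ∈ (0, ρ_max]` admits an index `i ∈ {1,…,N}` with `ρ* ≤ ρ_i ≤ ρ_max` and
`log 2·(1/log(1/ρ_i) - 1/log(1/ρ*)) ≤ D_max/N`. -/
theorem stmt_11 (N : ℕ) (hN : 1 ≤ N) (ρmax : ℝ) (hρ0 : 0 < ρmax) (hρ1 : ρmax < 1)
    (Dmax : ℝ) (hD : Dmax = Real.log 2 / Real.log (1 / ρmax))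
    (ρstar : ℝ) (hρstar0 : 0 < ρstar) (hρstar : ρstar ≤ ρmax) :
    ∃ i : ℕ, 1 ≤ i ∧ i ≤ N ∧
      ρstar ≤ ρmax ^ ((N : ℝ) / (i : ℝ)) ∧
      ρmax ^ ((N : ℝ) / (i : ℝ)) ≤ ρmax ∧
      Real.log 2 * (1 / Real.log (1 / ρmax ^ ((N : ℝ) / (i : ℝ)))
        - 1 / Real.log (1 / ρstar)) ≤ Dmax / N := by
  have hρs1 : ρstar < 1 := lt_of_le_of_lt hρstar hρ1
  have hLm : Real.log ρmax < 0 := Real.log_neg hρ0 hρ1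
  have hSm : Real.log ρstar < 0 := Real.log_neg hρstar0 hρs1
  set L : ℝ := -Real.log ρmax with hLdef
  set S : ℝ := -Real.log ρstar with hSdef
  have hLpos : 0 < L := by simp [hLdef]; linarith
  have hSpos : 0 < S := by simp [hSdef]; linarith
  have hLS : L ≤ S := by
    have := Real.log_le_log hρstar0 hρstar
    simp [hLdef, hSdef]; linarith
  have hNpos : (0:ℝ) < N := by exact_mod_cast hN
  set x : ℝ := (N : ℝ) * L / S with hxdef
  have hxpos : 0 < x := by positivity
  refine ⟨⌈x⌉₊, ?_, ?_, ?_, ?_, ?_⟩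
  · exact Nat.one_le_ceil_iff.mpr hxpos
  · refine Nat.ceil_le.mpr ?_
    rw [hxdef, div_le_iff₀ hSpos]
    nlinarith
  all_goals
    set i : ℕ := ⌈x⌉₊ with hidef
    have hipos : 0 < (i:ℝ) := by exact_mod_cast Nat.one_le_ceil_iff.mpr hxpos
    have hle : x ≤ (i:ℝ) := Nat.le_ceil x
    have hkey : (N:ℝ) * L ≤ i * S := by
      rw [hxdef, div_le_iff₀ hSpos] at hle; linarith
  · -- ρstar ≤ ρmax ^ (N/i)
    have h1 : ρmax ^ ((N : ℝ) / (i : ℝ)) = Real.exp (Real.log ρmax * ((N:ℝ)/(i:ℝ))) :=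
      Real.rpow_def_of_pos hρ0 _
    rw [h1, ← Real.exp_log hρstar0, Real.exp_le_exp]
    have : Real.log ρmax * ((N:ℝ)/(i:ℝ)) = -((N:ℝ) * L / i) := by
      rw [hLdef]; ring
    rw [this]
    have : Real.log ρstar = -S := by rw [hSdef]; ring
    rw [this, neg_le_neg_iff, div_le_iff₀ hipos]
    nlinarith
  · -- ρmax ^ (N/i) ≤ ρmax
    have hiN : (i:ℝ) ≤ (N:ℝ) := by
      exact_mod_cast Nat.ceil_le.mpr (by rw [hxdef, div_le_iff₀ hSpos]; nlinarith)
    have h1 : (1:ℝ) ≤ (N:ℝ)/(i:ℝ) := (one_le_div hipos).mpr hiN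
    calc ρmax ^ ((N : ℝ) / (i : ℝ)) ≤ ρmax ^ (1:ℝ) :=
          Real.rpow_le_rpow_of_exponent_ge hρ0 hρ1.le h1
      _ = ρmax := Real.rpow_one _
  · -- main inequality
    have hlogpow : Real.log (1 / ρmax ^ ((N : ℝ) / (i : ℝ))) = (N:ℝ)/(i:ℝ) * L := by
      rw [one_div, Real.log_inv, Real.log_rpow hρ0, hLdef]; ring
    have hlogstar : Real.log (1 / ρstar) = S := by
      rw [one_div, Real.log_inv, hSdef]
    have hlogmax : Real.log (1 / ρmax) = L := by
      rw [one_div, Real.log_inv, hLdef]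
    have hceil2 : (i:ℝ) ≤ x + 1 := (Nat.ceil_lt_add_one hxpos.le).le
    have hkey2 : (i:ℝ) * S ≤ (N:ℝ) * L + S := by
      rw [hxdef] at hceil2
      nlinarith [mul_le_mul_of_nonneg_right hceil2 hSpos.le,
        div_mul_cancel₀ ((N:ℝ)*L) hSpos.ne']
    rw [hlogpow, hlogstar, hD, hlogmax]
    have hlog2 : (0:ℝ) ≤ Real.log 2 := Real.log_nonneg one_le_two
    have hmain : 1 / ((N:ℝ)/(i:ℝ) * L) - 1 / S ≤ 1 / (L * N) := by
      have e1 : 1 / ((N:ℝ)/(i:ℝ) * L) = (i:ℝ) / ((N:ℝ) * L) := by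
        field_simp
      rw [e1, sub_le_iff_le_add, div_add_div _ _ (by positivity) hSpos.ne',
        div_le_div_iff₀ (by positivity) (by positivity)]
      nlinarith [mul_le_mul_of_nonneg_left hkey2 (by positivity : (0:ℝ) ≤ (N:ℝ)*L)]
    calc Real.log 2 * (1 / ((N:ℝ)/(i:ℝ) * L) - 1 / S)
        ≤ Real.log 2 * (1 / (L * N)) := by
          exact mul_le_mul_of_nonneg_left hmain hlog2
      _ = Real.log 2 / L / N := by field_simp
end
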